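/- arXiv:1411.7859 — 2 statements merged into one kernel-verified Lean document; each statement's English description precedes it below -/
import Mathlib

section
/- Let x < y be real numbers, let α₁, α₂, α₃, α₄ satisfy 1 ≥ α₁ > α₂ > α₃ > α₄ ≥ 0, and let a₁, a₂, a₃, a₄ be real numbers with a₁ + a₂ + a₃ + a₄ = 0. If for every continuous convex function f : [x,y] → ℝ and every antiderivative F of f the inequality (Σ_{i=1}^{4} aᵢF(αᵢx + (1−αᵢ)y))/(y−x) ≤ (f(x)+f(y))/2 holds, then a₁(α₂−α₁) + (a₁+a₂)(α₃−α₂) + (a₁+a₂+a₃)(α₄−α₃) = 1 and a₁(α₂²−α₁²) + (a₁+a₂)(α₃²−α₂²) + (a₁+a₂+a₃)(α₄²−α₃²) = 1. -/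
/-!
A quadrature rule that never overestimates the trapezoidal value on convex functions is exact on
affine functions, since both `f` and `-f` are then convex. Exactness for `f ≡ 1` and `f = id`
means the rule integrates `1` and `t` correctly; writing the nodes as `y + αᵢ (x - y)` and using
`∑ aᵢ = 0`, this says `∑ aᵢ αᵢ = -1` and `∑ aᵢ αᵢ² = -1`, and (M1), (E1) are these two
identities after summation by parts.
-/

open Finset

section Quadrature

variable {ι : Type*} [Fintype ι] {x y : ℝ} {a α : ι → ℝ}

lemma quadrature_eq_of_convexOn_of_concaveOn
    (H : ∀ f F : ℝ → ℝ, ContinuousOn f (Set.Icc x y) → ConvexOn ℝ (Set.Icc x y) f →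
        (∀ t ∈ Set.Icc x y, HasDerivWithinAt F (f t) (Set.Icc x y) t) →
        (∑ i, a i * F (α i * x + (1 - α i) * y)) / (y - x) ≤ (f x + f y) / 2)
    {f F : ℝ → ℝ} (hf : ContinuousOn f (Set.Icc x y)) (hconv : ConvexOn ℝ (Set.Icc x y) f)
    (hconc : ConcaveOn ℝ (Set.Icc x y) f)
    (hF : ∀ t ∈ Set.Icc x y, HasDerivWithinAt F (f t) (Set.Icc x y) t) :
    (∑ i, a i * F (α i * x + (1 - α i) * y)) / (y - x) = (f x + f y) / 2 := by
  have hneg := H (-f) (-F) hf.neg hconc.neg fun t ht => (hF t ht).neg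
  simp only [Pi.neg_apply, mul_neg, sum_neg_distrib, neg_div] at hneg
  linarith [H f F hf hconv hF]

lemma sum_mul_node (ha : ∑ i, a i = 0) :
    ∑ i, a i * (α i * x + (1 - α i) * y) = (x - y) * ∑ i, a i * α i := by
  have : ∀ i, a i * (α i * x + (1 - α i) * y) = y * a i + (x - y) * (a i * α i) :=
    fun i => by ring
  simp only [this, sum_add_distrib, ← mul_sum, ha, mul_zero, zero_add]

lemma sum_mul_node_sq (ha : ∑ i, a i = 0) :
    ∑ i, a i * (α i * x + (1 - α i) * y) ^ 2
      = 2 * y * (x - y) * ∑ i, a i * α i + (x - y) ^ 2 * ∑ i, a i * α i ^ 2 := by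
  have : ∀ i, a i * (α i * x + (1 - α i) * y) ^ 2
      = y ^ 2 * a i + 2 * y * (x - y) * (a i * α i) + (x - y) ^ 2 * (a i * α i ^ 2) :=
    fun i => by ring
  simp only [this, sum_add_distrib, ← mul_sum, ha, mul_zero, zero_add]

lemma sum_mul_eq_neg_one_of_quadrature_exact_const (hxy : x ≠ y) (ha : ∑ i, a i = 0)
    (hexact : (∑ i, a i * (α i * x + (1 - α i) * y)) / (y - x) = (1 + 1) / 2) :
    ∑ i, a i * α i = -1 := by
  rw [sum_mul_node ha, div_eq_iff (sub_ne_zero.2 hxy.symm)] at hexact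
  apply mul_left_cancel₀ (sub_ne_zero.2 hxy)
  linear_combination hexact

lemma sum_mul_sq_eq_neg_one_of_quadrature_exact_id (hxy : x ≠ y) (ha : ∑ i, a i = 0)
    (hmoment : ∑ i, a i * α i = -1)
    (hexact : (∑ i, a i * ((α i * x + (1 - α i) * y) ^ 2 / 2)) / (y - x) = (x + y) / 2) :
    ∑ i, a i * α i ^ 2 = -1 := by
  simp only [mul_div_assoc', ← sum_div, div_div] at hexact
  rw [sum_mul_node_sq ha, hmoment,
    div_eq_iff (mul_ne_zero two_ne_zero (sub_ne_zero.2 hxy.symm))] at hexact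
  apply mul_left_cancel₀ (pow_ne_zero 2 (sub_ne_zero.2 hxy))
  linear_combination hexact

end Quadrature

theorem stmt_8_general (x y : ℝ) (hxy : x < y) (α₁ α₂ α₃ α₄ a₁ a₂ a₃ a₄ : ℝ)
    (ha : a₁ + a₂ + a₃ + a₄ = 0)
    (H : ∀ f F : ℝ → ℝ, ContinuousOn f (Set.Icc x y) → ConvexOn ℝ (Set.Icc x y) f →
        (∀ t ∈ Set.Icc x y, HasDerivWithinAt F (f t) (Set.Icc x y) t) →
        (a₁ * F (α₁ * x + (1 - α₁) * y) + a₂ * F (α₂ * x + (1 - α₂) * y)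
            + a₃ * F (α₃ * x + (1 - α₃) * y) + a₄ * F (α₄ * x + (1 - α₄) * y)) / (y - x)
          ≤ (f x + f y) / 2) :
    a₁ * (α₂ - α₁) + (a₁ + a₂) * (α₃ - α₂) + (a₁ + a₂ + a₃) * (α₄ - α₃) = 1 ∧
    a₁ * (α₂ ^ 2 - α₁ ^ 2) + (a₁ + a₂) * (α₃ ^ 2 - α₂ ^ 2)
      + (a₁ + a₂ + a₃) * (α₄ ^ 2 - α₃ ^ 2) = 1 := by
  set a : Fin 4 → ℝ := ![a₁, a₂, a₃, a₄]
  set α : Fin 4 → ℝ := ![α₁, α₂, α₃, α₄]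
  have ha' : ∑ i, a i = 0 := by rw [Fin.sum_univ_four]; exact ha
  have H' : ∀ f F : ℝ → ℝ, ContinuousOn f (Set.Icc x y) → ConvexOn ℝ (Set.Icc x y) f →
      (∀ t ∈ Set.Icc x y, HasDerivWithinAt F (f t) (Set.Icc x y) t) →
      (∑ i, a i * F (α i * x + (1 - α i) * y)) / (y - x) ≤ (f x + f y) / 2 :=
    fun f F hf hconv hF => by rw [Fin.sum_univ_four]; exact H f F hf hconv hF
  have hc : Convex ℝ (Set.Icc x y) := convex_Icc x y
  have exact_one := quadrature_eq_of_convexOn_of_concaveOn (f := fun _ => 1) (F := id)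
    H' continuousOn_const (convexOn_const 1 hc) (concaveOn_const 1 hc)
    fun t _ => (hasDerivAt_id t).hasDerivWithinAt
  have exact_id := quadrature_eq_of_convexOn_of_concaveOn (F := fun t => t ^ 2 / 2)
    H' continuousOn_id (convexOn_id hc) (concaveOn_id hc)
    fun t _ => by simpa using ((hasDerivAt_pow 2 t).div_const 2).hasDerivWithinAt
  have moment₁ := sum_mul_eq_neg_one_of_quadrature_exact_const hxy.ne ha' exact_one
  have moment₂ := sum_mul_sq_eq_neg_one_of_quadrature_exact_id hxy.ne ha' moment₁ exact_id
  rw [Fin.sum_univ_four] at moment₁ moment₂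
  change a₁ * α₁ + a₂ * α₂ + a₃ * α₃ + a₄ * α₄ = -1 at moment₁
  change a₁ * α₁ ^ 2 + a₂ * α₂ ^ 2 + a₃ * α₃ ^ 2 + a₄ * α₄ ^ 2 = -1 at moment₂
  exact ⟨by linear_combination -moment₁ + α₄ * ha, by linear_combination -moment₂ + α₄ ^ 2 * ha⟩

/-- Lemma 3, second part: if the inequality
`(∑ aᵢ F(αᵢx + (1-αᵢ)y))/(y-x) ≤ (f(x)+f(y))/2` holds for every continuous convex `f`
and every antiderivative `F` of `f`, then conditions (M1) and (E1) hold. -/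
theorem stmt_8 (x y : ℝ) (hxy : x < y) (α₁ α₂ α₃ α₄ a₁ a₂ a₃ a₄ : ℝ)
    (hα₁ : α₁ ≤ 1) (h12 : α₂ < α₁) (h23 : α₃ < α₂) (h34 : α₄ < α₃) (hα₄ : 0 ≤ α₄)
    (ha : a₁ + a₂ + a₃ + a₄ = 0)
    (H : ∀ f F : ℝ → ℝ, ContinuousOn f (Set.Icc x y) → ConvexOn ℝ (Set.Icc x y) f →
        (∀ t ∈ Set.Icc x y, HasDerivWithinAt F (f t) (Set.Icc x y) t) →
        (a₁ * F (α₁ * x + (1 - α₁) * y) + a₂ * F (α₂ * x + (1 - α₂) * y)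
            + a₃ * F (α₃ * x + (1 - α₃) * y) + a₄ * F (α₄ * x + (1 - α₄) * y)) / (y - x)
          ≤ (f x + f y) / 2) :
    a₁ * (α₂ - α₁) + (a₁ + a₂) * (α₃ - α₂) + (a₁ + a₂ + a₃) * (α₄ - α₃) = 1 ∧
    a₁ * (α₂ ^ 2 - α₁ ^ 2) + (a₁ + a₂) * (α₃ ^ 2 - α₂ ^ 2)
      + (a₁ + a₂ + a₃) * (α₄ ^ 2 - α₃ ^ 2) = 1 :=
  stmt_8_general x y hxy α₁ α₂ α₃ α₄ a₁ a₂ a₃ a₄ ha H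
end

section
/- Let x < y be real numbers, let α₁, α₂, α₃, α₄ satisfy 1 = α₁ > α₂ > α₃ > α₄ = 0, let a₁, a₂, a₃, a₄ be reals with a₁ + a₂ + a₃ + a₄ = 0, and suppose conditions (M1) and (E1) hold. If a₁ < −1, then for every continuous convex function f : [x,y] → ℝ and every antiderivative F of f one has f((x+y)/2) ≤ (1/(y−x)) ∫ₓʸ f(t) dt ≤ (Σ_{i=1}^{4} aᵢF(αᵢx + (1−αᵢ)y))/(y−x). -/
/-!
Write `tᵢ = αᵢ x + (1 - αᵢ) y` and `cₖ = 1 + a₁ + ⋯ + aₖ`. Since `∑ aᵢ = 0`, the gap between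
the right-hand side and the mean of `f` is `-∑ₖ cₖ ∫_{tₖ}^{tₖ₊₁} f / (y - x)`, and (M1), (E1)
amount to saying that the step weight `c` is orthogonal to `1` and `t` on `[x, y]`. Together with `c₁ < 0` this
forces `c₃ ≤ 0 ≤ c₂`. Hermite–Hadamard on each piece then bounds `∑ cₖ ∫ f` by a combination of
point values: negative masses at the midpoints of the two outer pieces and positive masses at `t₂`
and `t₃`, which lie between them. This discrete weight is still orthogonal to affine functions, so
the chord inequality for `f` makes it nonpositive. The left inequality is Hermite–Hadamard itself.
-/

open Set intervalIntegral

theorem integral_eq_sub_of_hasDerivWithinAt_Icc {f F : ℝ → ℝ} {a b : ℝ} (hab : a ≤ b)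
    (hF : ∀ t ∈ Icc a b, HasDerivWithinAt F (f t) (Icc a b) t)
    (hf : ContinuousOn f (Icc a b)) :
    ∫ t in a..b, f t = F b - F a :=
  integral_eq_sub_of_hasDerivAt_of_le hab (fun t ht => (hF t ht).continuousWithinAt)
    (fun t ht => (hF t (Ioo_subset_Icc_self ht)).hasDerivAt (Icc_mem_nhds ht.1 ht.2))
    (hf.intervalIntegrable_of_Icc hab)

theorem integral_affine_chord (a b p q : ℝ) :
    ∫ t in a..b, ((b - t) * p + (t - a) * q) = (b - a) ^ 2 * (p + q) / 2 := by
  have affine : (fun t => (b - t) * p + (t - a) * q) = fun t => (b * p - a * q) + (q - p) * t :=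
    funext fun t => by ring
  rw [affine, integral_add intervalIntegrable_const
    ((continuous_const_mul (q - p)).intervalIntegrable a b), intervalIntegral.integral_const,
    integral_const_mul, integral_id, smul_eq_mul]
  ring

namespace ConvexOn

variable {f : ℝ → ℝ}

theorem sub_mul_le_of_mem_Icc {s : Set ℝ} (hf : ConvexOn ℝ s f) {u p v : ℝ}
    (hu : u ∈ s) (hv : v ∈ s) (hp : p ∈ Icc u v) :
    (v - u) * f p ≤ (v - p) * f u + (p - u) * f v := by
  rcases hp.1.eq_or_lt with rfl | hup
  · linarith
  rcases hp.2.eq_or_lt with rfl | hpv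
  · linarith
  exact hf.secant_mono_aux1 hu hv hup hpv

theorem add_le_of_mem_Icc {s : Set ℝ} (hf : ConvexOn ℝ s f) {u v p q A B w : ℝ}
    (hu : u ∈ s) (hv : v ∈ s) (huv : u < v) (hp : p ∈ Icc u v) (hq : q ∈ Icc u v)
    (hw : 0 ≤ w) (hmass : A + B = 2 * w) (hmoment : A * u + B * v = w * (p + q)) :
    w * f p + w * f q ≤ A * f u + B * f v := by
  have hp' := mul_le_mul_of_nonneg_left (hf.sub_mul_le_of_mem_Icc hu hv hp) hw
  have hq' := mul_le_mul_of_nonneg_left (hf.sub_mul_le_of_mem_Icc hu hv hq) hw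
  have hA : w * (v - p) + w * (v - q) = A * (v - u) := by linear_combination hmoment - v * hmass
  have hB : w * (p - u) + w * (q - u) = B * (v - u) := by linear_combination u * hmass - hmoment
  refine le_of_mul_le_mul_left ?_ (sub_pos.2 huv)
  linear_combination hp' + hq' + f u * hA + f v * hB

theorem mul_midpoint_le_integral {a b : ℝ} (hab : a ≤ b) (hc : ContinuousOn f (Icc a b))
    (hf : ConvexOn ℝ (Icc a b) f) :
    (b - a) * f ((a + b) / 2) ≤ ∫ t in a..b, f t := by
  have hrefl : ∀ t ∈ Icc a b, a + b - t ∈ Icc a b := fun t ht =>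
    ⟨by linarith [ht.2], by linarith [ht.1]⟩
  have hint : IntervalIntegrable f MeasureTheory.volume a b := hc.intervalIntegrable_of_Icc hab
  have hint' : IntervalIntegrable (fun t => f (a + b - t)) MeasureTheory.volume a b :=
    (hc.comp (by fun_prop) hrefl).intervalIntegrable_of_Icc hab
  have hpt : ∀ t ∈ Icc a b, f ((a + b) / 2) ≤ (f t + f (a + b - t)) / 2 := by
    intro t ht
    have := hf.2 ht (hrefl t ht) (by norm_num : (0 : ℝ) ≤ 1 / 2) (by norm_num : (0 : ℝ) ≤ 1 / 2)
      (by norm_num)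
    simp only [smul_eq_mul] at this
    rw [show 1 / 2 * t + 1 / 2 * (a + b - t) = (a + b) / 2 by ring] at this
    linarith
  calc (b - a) * f ((a + b) / 2) = ∫ _ in a..b, f ((a + b) / 2) := by simp
    _ ≤ ∫ t in a..b, (f t + f (a + b - t)) / 2 :=
        integral_mono_on hab intervalIntegrable_const ((hint.add hint').div_const 2) hpt
    _ = ((∫ t in a..b, f t) + ∫ t in a..b, f (a + b - t)) / 2 := by
        rw [intervalIntegral.integral_div, integral_add hint hint']
    _ = ∫ t in a..b, f t := by simp [integral_comp_sub_left f (a + b)]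

theorem integral_le_mul_add {a b : ℝ} (hab : a < b) (hc : ContinuousOn f (Icc a b))
    (hf : ConvexOn ℝ (Icc a b) f) :
    ∫ t in a..b, f t ≤ (b - a) * (f a + f b) / 2 := by
  have hchord := integral_mono_on (μ := MeasureTheory.volume) hab.le
    ((hc.intervalIntegrable_of_Icc hab.le).const_mul (b - a))
    (by apply Continuous.intervalIntegrable; fun_prop)
    (fun t ht => hf.sub_mul_le_of_mem_Icc (left_mem_Icc.2 hab.le) (right_mem_Icc.2 hab.le) ht)
  rw [integral_const_mul, integral_affine_chord] at hchord
  refine le_of_mul_le_mul_left ?_ (sub_pos.2 hab)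
  linear_combination hchord

theorem weighted_integral_nonpos {x t₂ t₃ y c₁ c₂ c₃ : ℝ}
    (hxt₂ : x < t₂) (ht₂₃ : t₂ < t₃) (ht₃y : t₃ < y)
    (hc : ContinuousOn f (Icc x y)) (hf : ConvexOn ℝ (Icc x y) f) (hc₁ : c₁ ≤ 0)
    (hmass : c₁ * (t₂ - x) + c₂ * (t₃ - t₂) + c₃ * (y - t₃) = 0)
    (hmoment : c₁ * (t₂ ^ 2 - x ^ 2) + c₂ * (t₃ ^ 2 - t₂ ^ 2) + c₃ * (y ^ 2 - t₃ ^ 2) = 0) :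
    c₁ * (∫ t in x..t₂, f t) + c₂ * (∫ t in t₂..t₃, f t) + c₃ * ∫ t in t₃..y, f t ≤ 0 := by
  have hrestrict : ∀ a b, x ≤ a → b ≤ y →
      ContinuousOn f (Icc a b) ∧ ConvexOn ℝ (Icc a b) f := fun a b hxa hby =>
    have hsub := Icc_subset_Icc hxa hby
    ⟨hc.mono hsub, hf.subset hsub (convex_Icc a b)⟩
  have hc₃ : c₃ ≤ 0 := by
    have hsign : c₃ * ((y - t₃) * (y - t₂)) = c₁ * ((t₂ - x) * (t₃ - x)) := by
      linear_combination hmoment - (t₂ + t₃) * hmass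
    have : c₁ * ((t₂ - x) * (t₃ - x)) ≤ 0 :=
      mul_nonpos_of_nonpos_of_nonneg hc₁ (by nlinarith)
    exact nonpos_of_mul_nonpos_left (hsign ▸ this) (by nlinarith)
  have hc₂ : 0 ≤ c₂ := by nlinarith
  obtain ⟨hcont₁, hconv₁⟩ := hrestrict x t₂ le_rfl (by linarith)
  obtain ⟨hcont₂, hconv₂⟩ := hrestrict t₂ t₃ hxt₂.le (by linarith)
  obtain ⟨hcont₃, hconv₃⟩ := hrestrict t₃ y (by linarith) le_rfl
  have h₁ := mul_le_mul_of_nonpos_left (hconv₁.mul_midpoint_le_integral hxt₂.le hcont₁) hc₁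
  have h₂ := mul_le_mul_of_nonneg_left (hconv₂.integral_le_mul_add ht₂₃ hcont₂) hc₂
  have h₃ := mul_le_mul_of_nonpos_left (hconv₃.mul_midpoint_le_integral ht₃y.le hcont₃) hc₃
  -- the midpoints of the outer intervals carry negative mass, `t₂` and `t₃` between them positive
  have hchord := hf.add_le_of_mem_Icc (u := (x + t₂) / 2) (v := (t₃ + y) / 2)
    (p := t₂) (q := t₃) (A := -c₁ * (t₂ - x)) (B := -c₃ * (y - t₃)) (w := c₂ * (t₃ - t₂) / 2)
    ⟨by linarith, by linarith⟩ ⟨by linarith, by linarith⟩ (by linarith)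
    ⟨by linarith, by linarith⟩ ⟨by linarith, by linarith⟩ (by nlinarith)
    (by linear_combination -hmass) (by linear_combination -hmoment / 2)
  linarith

end ConvexOn

/-- Theorem 1(ii): if a₁ < -1 then f((x+y)/2) ≤ (1/(y-x))∫ₓʸ f ≤ (∑ aᵢF(αᵢx+(1-αᵢ)y))/(y-x). -/
theorem stmt_11 (x y : ℝ) (hxy : x < y) (α₁ α₂ α₃ α₄ a₁ a₂ a₃ a₄ : ℝ)
    (hα₁ : α₁ = 1) (h12 : α₂ < α₁) (h23 : α₃ < α₂) (h34 : α₄ < α₃) (hα₄ : α₄ = 0)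
    (ha : a₁ + a₂ + a₃ + a₄ = 0)
    (hM1 : a₁ * (α₂ - α₁) + (a₁ + a₂) * (α₃ - α₂) + (a₁ + a₂ + a₃) * (α₄ - α₃) = 1)
    (hE1 : a₁ * (α₂ ^ 2 - α₁ ^ 2) + (a₁ + a₂) * (α₃ ^ 2 - α₂ ^ 2)
        + (a₁ + a₂ + a₃) * (α₄ ^ 2 - α₃ ^ 2) = 1)
    (ha₁ : a₁ < -1)
    (f F : ℝ → ℝ)
    (hf_cont : ContinuousOn f (Set.Icc x y)) (hf_conv : ConvexOn ℝ (Set.Icc x y) f)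
    (hF : ∀ t ∈ Set.Icc x y, HasDerivWithinAt F (f t) (Set.Icc x y) t) :
    f ((x + y) / 2) ≤ (1 / (y - x)) * ∫ t in x..y, f t ∧
      (1 / (y - x)) * (∫ t in x..y, f t)
        ≤ (a₁ * F (α₁ * x + (1 - α₁) * y) + a₂ * F (α₂ * x + (1 - α₂) * y)
          + a₃ * F (α₃ * x + (1 - α₃) * y) + a₄ * F (α₄ * x + (1 - α₄) * y)) / (y - x) := by
  subst hα₁ hα₄
  have hyx : 0 < y - x := sub_pos.2 hxy
  rw [one_div_mul_eq_div, le_div_iff₀ hyx]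
  refine ⟨by linarith [hf_conv.mul_midpoint_le_integral hxy.le hf_cont],
    div_le_div_of_nonneg_right ?_ hyx.le⟩
  simp only [one_mul, sub_self, zero_mul, add_zero, sub_zero, zero_add]
  set t₂ := α₂ * x + (1 - α₂) * y
  set t₃ := α₃ * x + (1 - α₃) * y
  have ftc : ∀ a b, x ≤ a → a ≤ b → b ≤ y → ∫ t in a..b, f t = F b - F a := fun a b hxa hab hby =>
    have hsub := Icc_subset_Icc hxa hby
    integral_eq_sub_of_hasDerivWithinAt_Icc hab (fun t ht => (hF t (hsub ht)).mono hsub)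
      (hf_cont.mono hsub)
  have hxt₂ : x < t₂ := by nlinarith [mul_pos (sub_pos.2 h12) hyx]
  have ht₂₃ : t₂ < t₃ := by nlinarith [mul_pos (sub_pos.2 h23) hyx]
  have ht₃y : t₃ < y := by nlinarith [mul_pos h34 hyx]
  have hweighted := hf_conv.weighted_integral_nonpos (c₁ := 1 + a₁) (c₂ := 1 + a₁ + a₂)
    (c₃ := 1 + a₁ + a₂ + a₃) hxt₂ ht₂₃ ht₃y hf_cont (by linarith)
    (by linear_combination (x - y) * hM1)
    (by linear_combination 2 * y * (x - y) * hM1 + (x - y) ^ 2 * hE1)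
  rw [ftc x t₂ le_rfl hxt₂.le (by linarith), ftc t₂ t₃ hxt₂.le ht₂₃.le (by linarith),
    ftc t₃ y (by linarith) ht₃y.le le_rfl] at hweighted
  rw [ftc x y le_rfl hxy.le le_rfl]
  linear_combination hweighted - F y * ha
end
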